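/- arXiv:1305.2982 — 2 statements merged into one kernel-verified Lean document; each statement's English description precedes it below -/
import Mathlib

section
/- Let (Ω, P) be a probability space, let z : Ω → ℝ be uniformly distributed on [0,1], let σ(a) = 1/(1 + exp(−a)), and for each a ∈ ℝ let hₐ = 1_{z < σ(a)}. Let L₁, L₀ : Ω → ℝ be integrable random variables each independent of z, and let F(a) = E[hₐ·L₁ + (1 − hₐ)·L₀] be the expected loss as a function of the activation a. Then F is differentiable at every a, and F'(a) = E[(hₐ − σ(a))·(hₐ·L₁ + (1 − hₐ)·L₀)]; that is, the estimator (h − σ(a))·L is an unbiased estimator of the derivative of the expected loss with respect to the activation a. -/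
/-!
The gate `hₐ` is the indicator of the event `{z < σ(a)}`, which has probability `σ(a)` and is
independent of the losses, so `F(a) = σ(a)·E[L₁] + (1 − σ(a))·E[L₀]` and
`F'(a) = σ(a)(1 − σ(a))(E[L₁] − E[L₀])`. Since `h² = h` and `h(1 − h) = 0`, the estimator equals
`(1 − σ(a))·h·L₁ − σ(a)·(1 − h)·L₀`, whose expectation is the same quantity.
-/

open MeasureTheory ProbabilityTheory

/-- The logistic sigmoid `σ(a) = 1/(1 + exp(−a))`. -/
noncomputable def sigmoid (a : ℝ) : ℝ := 1 / (1 + Real.exp (-a))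

lemma sigmoid_eq_real_sigmoid : sigmoid = Real.sigmoid := by
  funext a
  rw [sigmoid, Real.sigmoid_def, one_div]

lemma hasDerivAt_sigmoid (a : ℝ) : HasDerivAt sigmoid (sigmoid a * (1 - sigmoid a)) a := by
  rw [sigmoid_eq_real_sigmoid]
  exact Real.hasDerivAt_sigmoid a

lemma measureReal_preimage_Iio_of_map_eq_uniform {Ω : Type*} [MeasurableSpace Ω]
    {μ : Measure Ω} {z : Ω → ℝ} (hz : Measurable z)
    (hunif : Measure.map z μ = volume.restrict (Set.Icc (0 : ℝ) 1)) {p : ℝ}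
    (hp₀ : 0 ≤ p) (hp₁ : p ≤ 1) :
    μ.real (z ⁻¹' Set.Iio p) = p := by
  have hinter : Set.Iio p ∩ Set.Icc 0 1 = Set.Ico 0 p := by
    ext x
    simp only [Set.mem_inter_iff, Set.mem_Iio, Set.mem_Icc, Set.mem_Ico]
    constructor
    · rintro ⟨hxp, hx₀, -⟩
      exact ⟨hx₀, hxp⟩
    · rintro ⟨hx₀, hxp⟩
      exact ⟨hxp, hx₀, by linarith⟩
  rw [measureReal_def, ← Measure.map_apply hz measurableSet_Iio, hunif,
    Measure.restrict_apply measurableSet_Iio, hinter, Real.volume_Ico, sub_zero,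
    ENNReal.toReal_ofReal hp₀]

lemma one_sub_indicator_one {α : Type*} (s : Set α) (x : α) :
    1 - s.indicator (1 : α → ℝ) x = sᶜ.indicator 1 x := by
  rw [Set.indicator_compl, Pi.sub_apply, Pi.one_apply]

section Gate

variable {Ω : Type*} [MeasurableSpace Ω] {μ : Measure Ω} {A : Set Ω} {L L₁ L₀ : Ω → ℝ}

lemma integrable_indicator_one_mul (hA : MeasurableSet A) (hL : Integrable L μ) :
    Integrable (fun ω => A.indicator 1 ω * L ω) μ := by
  simpa only [← Set.indicator_mul_left, Pi.one_apply, one_mul] using hL.indicator hA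

lemma integral_indicator_one_mul_of_indepFun (hA : MeasurableSet A)
    (hL : AEStronglyMeasurable L μ) (hind : IndepFun (A.indicator (1 : Ω → ℝ)) L μ) :
    ∫ ω, A.indicator 1 ω * L ω ∂μ = μ.real A * ∫ ω, L ω ∂μ := by
  rw [hind.integral_fun_mul_eq_mul_integral
    (measurable_one.indicator hA).aestronglyMeasurable hL, integral_indicator_one hA]

lemma integrable_one_sub_indicator_one_mul (hA : MeasurableSet A) (hL : Integrable L μ) :
    Integrable (fun ω => (1 - A.indicator 1 ω) * L ω) μ := by
  simpa only [one_sub_indicator_one] using integrable_indicator_one_mul hA.compl hL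

variable [IsProbabilityMeasure μ]

lemma integral_one_sub_indicator_one_mul_of_indepFun (hA : MeasurableSet A)
    (hL : AEStronglyMeasurable L μ) (hind : IndepFun (A.indicator (1 : Ω → ℝ)) L μ) :
    ∫ ω, (1 - A.indicator 1 ω) * L ω ∂μ = (1 - μ.real A) * ∫ ω, L ω ∂μ := by
  have hind_compl : IndepFun (Aᶜ.indicator (1 : Ω → ℝ)) L μ := by
    rw [Set.indicator_compl]
    exact hind.comp (measurable_const.sub measurable_id) measurable_id
  simp only [one_sub_indicator_one]
  rw [integral_indicator_one_mul_of_indepFun hA.compl hL hind_compl,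
    probReal_compl_eq_one_sub hA]

lemma integral_gated_loss (hA : MeasurableSet A) (hL₁ : Integrable L₁ μ) (hL₀ : Integrable L₀ μ)
    (hind₁ : IndepFun (A.indicator (1 : Ω → ℝ)) L₁ μ)
    (hind₀ : IndepFun (A.indicator (1 : Ω → ℝ)) L₀ μ) :
    ∫ ω, A.indicator 1 ω * L₁ ω + (1 - A.indicator 1 ω) * L₀ ω ∂μ
      = μ.real A * ∫ ω, L₁ ω ∂μ + (1 - μ.real A) * ∫ ω, L₀ ω ∂μ := by
  rw [integral_add (integrable_indicator_one_mul hA hL₁)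
      (integrable_one_sub_indicator_one_mul hA hL₀),
    integral_indicator_one_mul_of_indepFun hA hL₁.1 hind₁,
    integral_one_sub_indicator_one_mul_of_indepFun hA hL₀.1 hind₀]

lemma integral_gated_estimator (hA : MeasurableSet A) (hL₁ : Integrable L₁ μ) (hL₀ : Integrable L₀ μ)
    (hind₁ : IndepFun (A.indicator (1 : Ω → ℝ)) L₁ μ)
    (hind₀ : IndepFun (A.indicator (1 : Ω → ℝ)) L₀ μ) :
    ∫ ω, (A.indicator 1 ω - μ.real A) *
        (A.indicator 1 ω * L₁ ω + (1 - A.indicator 1 ω) * L₀ ω) ∂μ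
      = μ.real A * (1 - μ.real A) * (∫ ω, L₁ ω ∂μ - ∫ ω, L₀ ω ∂μ) := by
  set p := μ.real A
  have hsplit : ∀ ω, (A.indicator 1 ω - p) * (A.indicator 1 ω * L₁ ω + (1 - A.indicator 1 ω) * L₀ ω)
      = (1 - p) * (A.indicator 1 ω * L₁ ω) - p * ((1 - A.indicator 1 ω) * L₀ ω) := fun ω => by
    by_cases hω : ω ∈ A <;> simp [hω]
  simp only [hsplit]
  rw [integral_sub ((integrable_indicator_one_mul hA hL₁).const_mul _)
      ((integrable_one_sub_indicator_one_mul hA hL₀).const_mul _),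
    integral_const_mul, integral_const_mul,
    integral_indicator_one_mul_of_indepFun hA hL₁.1 hind₁,
    integral_one_sub_indicator_one_mul_of_indepFun hA hL₀.1 hind₀]
  ring

end Gate

/-- With `z` uniform on `[0,1]`, `hₐ = 1_{z < σ(a)}` for each activation `a`,
and `L₁, L₀` integrable losses independent of `z`, the expected loss
`F(a) = E[hₐ·L₁ + (1 − hₐ)·L₀]` is differentiable at every `a` with
`F'(a) = E[(hₐ − σ(a))·(hₐ·L₁ + (1 − hₐ)·L₀)]`: the estimator `(h − σ(a))·L` is an
unbiased estimator of the derivative of the expected loss w.r.t. the activation. -/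
theorem stmt2 {Ω : Type*} [MeasurableSpace Ω] (μ : Measure Ω) [IsProbabilityMeasure μ]
    (z : Ω → ℝ) (hz : Measurable z)
    (hunif : Measure.map z μ = volume.restrict (Set.Icc (0 : ℝ) 1))
    (h : ℝ → Ω → ℝ) (hh : h = fun a ω => if z ω < sigmoid a then 1 else 0)
    (L₁ L₀ : Ω → ℝ) (hL₁ : Integrable L₁ μ) (hL₀ : Integrable L₀ μ)
    (hind₁ : IndepFun L₁ z μ) (hind₀ : IndepFun L₀ z μ)
    (F : ℝ → ℝ) (hF : F = fun a => ∫ ω, h a ω * L₁ ω + (1 - h a ω) * L₀ ω ∂μ) :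
    ∀ a : ℝ, HasDerivAt F
      (∫ ω, (h a ω - sigmoid a) * (h a ω * L₁ ω + (1 - h a ω) * L₀ ω) ∂μ) a := by
  set A : ℝ → Set Ω := fun a => z ⁻¹' Set.Iio (sigmoid a)
  have hA : ∀ a, MeasurableSet (A a) := fun a => hz measurableSet_Iio
  have hgate : h = fun a => (A a).indicator 1 := by
    rw [hh]
    funext a ω
    by_cases hω : z ω < sigmoid a <;> simp [A, hω]
  subst hgate hF
  have hprob : ∀ a, μ.real (A a) = sigmoid a := fun a =>
    measureReal_preimage_Iio_of_map_eq_uniform hz hunif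
      (by rw [sigmoid_eq_real_sigmoid]; exact Real.sigmoid_nonneg a)
      (by rw [sigmoid_eq_real_sigmoid]; exact Real.sigmoid_le_one a)
  have hind : ∀ a {L : Ω → ℝ}, IndepFun L z μ → IndepFun ((A a).indicator (1 : Ω → ℝ)) L μ :=
    fun a L hLz => hLz.symm.comp (measurable_one.indicator measurableSet_Iio) measurable_id
  have hF : (fun a => ∫ ω, (A a).indicator 1 ω * L₁ ω + (1 - (A a).indicator 1 ω) * L₀ ω ∂μ)
      = fun a => sigmoid a * ∫ ω, L₁ ω ∂μ + (1 - sigmoid a) * ∫ ω, L₀ ω ∂μ := by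
    funext a
    rw [integral_gated_loss (hA a) hL₁ hL₀ (hind a hind₁) (hind a hind₀), hprob]
  intro a
  rw [hF]
  dsimp only
  have hestimator := integral_gated_estimator (hA a) hL₁ hL₀ (hind a hind₁) (hind a hind₀)
  rw [hprob] at hestimator
  rw [hestimator]
  have hσ := hasDerivAt_sigmoid a
  refine ((hσ.mul_const _).add ((hσ.const_sub 1).mul_const _)).congr_deriv ?_
  ring
end

section
/- Let (Ω, P) be a probability space, let z : Ω → ℝ be uniformly distributed on [0,1], let a ∈ ℝ, σ(a) = 1/(1 + exp(−a)), and h = 1_{z < σ(a)}. Let L₁, L₀ : Ω → ℝ be square-integrable random variables each independent of z, set L = h·L₁ + (1 − h)·L₀, and assume E[(h − σ(a))²] > 0. Then among all constants L̄ ∈ ℝ, the variance Var[(h − σ(a))·(L − L̄)] of the centered estimator is minimized at L̄ = E[(h − σ(a))²·L] / E[(h − σ(a))²]. -/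
/-!
Write `D = h − σ(a)`, `L̄* = E[D²L] / E[D²]` and `Y = D·(L − L̄*)`, so that
`D·(L − L̄) = Y + (L̄* − L̄)·D`. Since `z` is uniform, `P(h = 1) = σ(a)`, i.e. `E[D] = 0`; hence
`Cov(Y, D) = E[Y·D] = E[D²L] − L̄*·E[D²] = 0`, and
`Var[D·(L − L̄)] = Var Y + (L̄* − L̄)²·Var D ≥ Var Y`.
-/

open MeasureTheory ProbabilityTheory
open scoped ENNReal

lemma sigmoid_pos (a : ℝ) : 0 < sigmoid a := by
  unfold sigmoid; positivity

lemma sigmoid_lt_one (a : ℝ) : sigmoid a < 1 := by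
  unfold sigmoid
  rw [div_lt_one (by positivity)]
  linarith [Real.exp_pos (-a)]

section
variable {Ω : Type*} [MeasurableSpace Ω] {μ : Measure Ω}

lemma integral_ite_lt_of_map_eq_uniform {z : Ω → ℝ} (hz : Measurable z)
    (hunif : μ.map z = volume.restrict (Set.Icc (0 : ℝ) 1)) {s : ℝ} (hs0 : 0 ≤ s) (hs1 : s ≤ 1) :
    ∫ ω, (if z ω < s then 1 else 0) ∂μ = s := by
  have hind : (fun ω ↦ if z ω < s then (1 : ℝ) else 0) = (z ⁻¹' Set.Iio s).indicator 1 := by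
    ext ω; by_cases hω : z ω < s <;> simp [hω]
  have hIio : Set.Iio s ∩ Set.Icc 0 1 = Set.Ico 0 s := by
    ext x; simp only [Set.mem_inter_iff, Set.mem_Iio, Set.mem_Icc, Set.mem_Ico]
    constructor
    · rintro ⟨hxs, hx0, -⟩; exact ⟨hx0, hxs⟩
    · rintro ⟨hx0, hxs⟩; exact ⟨hxs, hx0, by linarith⟩
  rw [hind, integral_indicator_one (hz measurableSet_Iio),
    ← map_measureReal_apply hz measurableSet_Iio, hunif,
    measureReal_restrict_apply measurableSet_Iio, hIio, Real.volume_real_Ico_of_le hs0, sub_zero]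

lemma variance_le_variance_add_const_mul [IsFiniteMeasure μ] {X Y : Ω → ℝ} (hX : MemLp X 2 μ)
    (hY : MemLp Y 2 μ) (hXY : cov[X, Y; μ] = 0) (t : ℝ) :
    Var[X; μ] ≤ Var[fun ω ↦ X ω + t * Y ω; μ] := by
  rw [variance_fun_add hX (hY.const_mul t), covariance_const_mul_right, hXY, variance_const_mul]
  nlinarith [variance_nonneg Y μ, sq_nonneg t]

lemma covariance_mul_sub_optimal_eq_zero [IsProbabilityMeasure μ] {D L : Ω → ℝ}
    (hD : MemLp D ∞ μ) (hL : MemLp L 2 μ) (hD_mean : ∫ ω, D ω ∂μ = 0)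
    (hD_sq : ∫ ω, D ω ^ 2 ∂μ ≠ 0) :
    cov[fun ω ↦ D ω * (L ω - (∫ ω, D ω ^ 2 * L ω ∂μ) / ∫ ω, D ω ^ 2 ∂μ), D; μ] = 0 := by
  set c := (∫ ω, D ω ^ 2 * L ω ∂μ) / ∫ ω, D ω ^ 2 ∂μ
  have hD_sq_top : MemLp (fun ω ↦ D ω ^ 2) ∞ μ := by simpa [sq] using hD.mul' hD
  have hY : MemLp (fun ω ↦ D ω * (L ω - c)) 2 μ := (hL.sub (memLp_const c)).mul' hD
  rw [covariance_eq_sub hY (hD.mono_exponent le_top), hD_mean, mul_zero, sub_zero]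
  calc ∫ ω, D ω * (L ω - c) * D ω ∂μ
      = ∫ ω, (D ω ^ 2 * L ω - c * D ω ^ 2) ∂μ := by congr 1; ext ω; ring
    _ = (∫ ω, D ω ^ 2 * L ω ∂μ) - c * ∫ ω, D ω ^ 2 ∂μ := by
        rw [integral_sub ((hL.mul' hD_sq_top).integrable one_le_two)
          ((hD_sq_top.integrable le_top).const_mul c), integral_const_mul]
    _ = 0 := by rw [div_mul_cancel₀ _ hD_sq, sub_self]

theorem variance_mul_sub_optimal_le [IsProbabilityMeasure μ] {D L : Ω → ℝ}
    (hD : MemLp D ∞ μ) (hL : MemLp L 2 μ) (hD_mean : ∫ ω, D ω ∂μ = 0)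
    (hD_sq : ∫ ω, D ω ^ 2 ∂μ ≠ 0) (c : ℝ) :
    Var[fun ω ↦ D ω * (L ω - (∫ ω, D ω ^ 2 * L ω ∂μ) / ∫ ω, D ω ^ 2 ∂μ); μ]
      ≤ Var[fun ω ↦ D ω * (L ω - c); μ] := by
  set cstar := (∫ ω, D ω ^ 2 * L ω ∂μ) / ∫ ω, D ω ^ 2 ∂μ
  have hsplit : (fun ω ↦ D ω * (L ω - c))
      = fun ω ↦ D ω * (L ω - cstar) + (cstar - c) * D ω := by
    ext ω; ring
  rw [hsplit]
  exact variance_le_variance_add_const_mul ((hL.sub (memLp_const cstar)).mul' hD)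
    (hD.mono_exponent le_top) (covariance_mul_sub_optimal_eq_zero hD hL hD_mean hD_sq) _

end

theorem stmt7_general {Ω : Type*} [MeasurableSpace Ω] (μ : Measure Ω) [IsProbabilityMeasure μ]
    (z : Ω → ℝ) (hz : Measurable z)
    (hunif : Measure.map z μ = volume.restrict (Set.Icc (0 : ℝ) 1))
    (a : ℝ) (h : Ω → ℝ) (hh : h = fun ω => if z ω < sigmoid a then 1 else 0)
    (L₁ L₀ : Ω → ℝ) (hL₁ : MemLp L₁ 2 μ) (hL₀ : MemLp L₀ 2 μ)
    (L : Ω → ℝ) (hL : L = fun ω => h ω * L₁ ω + (1 - h ω) * L₀ ω)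
    (hpos : 0 < ∫ ω, (h ω - sigmoid a) ^ 2 ∂μ)
    (Var : (Ω → ℝ) → ℝ)
    (hVar : ∀ X : Ω → ℝ, Var X = (∫ ω, (X ω) ^ 2 ∂μ) - (∫ ω, X ω ∂μ) ^ 2)
    (Lstar : ℝ)
    (hLstar : Lstar = (∫ ω, (h ω - sigmoid a) ^ 2 * L ω ∂μ)
        / ∫ ω, (h ω - sigmoid a) ^ 2 ∂μ) :
    ∀ Lbar : ℝ,
      Var (fun ω => (h ω - sigmoid a) * (L ω - Lstar))
        ≤ Var (fun ω => (h ω - sigmoid a) * (L ω - Lbar)) := by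
  intro Lbar
  have hh_top : MemLp h ∞ μ := by
    refine memLp_top_of_bound ?_ 1 (ae_of_all _ fun ω ↦ ?_)
    · exact hh ▸ (measurable_const.ite (measurableSet_lt hz measurable_const)
        measurable_const).aestronglyMeasurable
    · rw [hh]; dsimp only; split_ifs <;> simp
  have hD : MemLp (fun ω ↦ h ω - sigmoid a) ∞ μ := hh_top.sub (memLp_const _)
  have hL2 : MemLp L 2 μ := hL ▸ (hL₁.mul' hh_top).add (hL₀.mul' ((memLp_const 1).sub hh_top))
  have hD_mean : ∫ ω, (h ω - sigmoid a) ∂μ = 0 := by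
    rw [integral_sub (hh_top.integrable le_top) (integrable_const _), hh,
      integral_ite_lt_of_map_eq_uniform hz hunif (sigmoid_pos a).le (sigmoid_lt_one a).le]
    simp
  have hVar_eq (c : ℝ) : Var (fun ω ↦ (h ω - sigmoid a) * (L ω - c))
      = Var[fun ω ↦ (h ω - sigmoid a) * (L ω - c); μ] :=
    (hVar _).trans (variance_eq_sub ((hL2.sub (memLp_const c)).mul' hD)).symm
  rw [hVar_eq, hVar_eq, hLstar]
  exact variance_mul_sub_optimal_le hD hL2 hD_mean hpos.ne' Lbar

/-- With `z` uniform on `[0,1]`, `h = 1_{z < σ(a)}`, square-integrable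
losses `L₁, L₀` independent of `z`, `L = h·L₁ + (1 − h)·L₀`, and
`E[(h − σ(a))²] > 0`, the variance `Var[(h − σ(a))·(L − L̄)]` of the centered
estimator is minimized over constants `L̄` at
`L̄ = E[(h − σ(a))²·L] / E[(h − σ(a))²]`. -/
theorem stmt7 {Ω : Type*} [MeasurableSpace Ω] (μ : Measure Ω) [IsProbabilityMeasure μ]
    (z : Ω → ℝ) (hz : Measurable z)
    (hunif : Measure.map z μ = volume.restrict (Set.Icc (0 : ℝ) 1))
    (a : ℝ) (h : Ω → ℝ) (hh : h = fun ω => if z ω < sigmoid a then 1 else 0)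
    (L₁ L₀ : Ω → ℝ) (hL₁ : MemLp L₁ 2 μ) (hL₀ : MemLp L₀ 2 μ)
    (hind₁ : IndepFun L₁ z μ) (hind₀ : IndepFun L₀ z μ)
    (L : Ω → ℝ) (hL : L = fun ω => h ω * L₁ ω + (1 - h ω) * L₀ ω)
    (hpos : 0 < ∫ ω, (h ω - sigmoid a) ^ 2 ∂μ)
    (Var : (Ω → ℝ) → ℝ)
    (hVar : ∀ X : Ω → ℝ, Var X = (∫ ω, (X ω) ^ 2 ∂μ) - (∫ ω, X ω ∂μ) ^ 2)
    (Lstar : ℝ)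
    (hLstar : Lstar = (∫ ω, (h ω - sigmoid a) ^ 2 * L ω ∂μ)
        / ∫ ω, (h ω - sigmoid a) ^ 2 ∂μ) :
    ∀ Lbar : ℝ,
      Var (fun ω => (h ω - sigmoid a) * (L ω - Lstar))
        ≤ Var (fun ω => (h ω - sigmoid a) * (L ω - Lbar)) :=
  stmt7_general μ z hz hunif a h hh L₁ L₀ hL₁ hL₀ L hL hpos Var hVar Lstar hLstar
end
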